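/- K_{2,p} vanishes exactly on degenerate quadratic forms: for π ∈ H_2, K_{2,p}(π) = 0 if and only if π(x,y) = λ(αx + βy)² for some reals λ, α, β. -/

import Mathlib

/-!
On a nondegenerate triangle the linear interpolant of a quadratic form `π` agrees with `π` at
the vertices, so at the point with barycentric coordinates `λ` the error is
`-∑_{i<j} λᵢ λⱼ π(Tⱼ - Tᵢ)`. Hence the error is at most the largest "squared edge length"
`|π(Tⱼ - Tᵢ)|`, and near the midpoint of the edge realising it, at least a fixed fraction of it.
Heron's formula with `π` as squared length, `2(ab + bc + ca) - a² - b² - c² = (4AC - B²)(2|T|)²`,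
forces an edge value of size `√|4AC - B²|` on every unit-area triangle, so `K_{2,p}(π) > 0`
unless `det π = 0`. Conversely, for `π = l (αx + βy)²` the unit-area triangles with one edge along
the isotropic direction `(β, -α)` and the opposite vertex at distance `~ r` from it have edge
values `0, l r², l r²`; letting `r → 0` gives `K_{2,p}(π) = 0`.
-/

open MeasureTheory

noncomputable section

/-- evaluation of the binary form of degree `m` with coefficients `a` -/
def formEval (m : ℕ) (a : Fin (m + 1) → ℝ) (z : ℝ × ℝ) : ℝ :=
  ∑ i : Fin (m + 1), a i * z.1 ^ (i : ℕ) * z.2 ^ (m - (i : ℕ))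

/-- `π` is a binary homogeneous form of degree `m` (an element of H_m) -/
def IsForm (m : ℕ) (π : ℝ × ℝ → ℝ) : Prop :=
  ∃ a : Fin (m + 1) → ℝ, ∀ z, π z = formEval m a z

/-- `p` is (the evaluation of) a polynomial of total degree at most `n` -/
def IsPolyDeg (n : ℕ) (p : ℝ × ℝ → ℝ) : Prop :=
  ∃ q : MvPolynomial (Fin 2) ℝ, q.totalDegree ≤ n ∧
    ∀ z : ℝ × ℝ, p z = MvPolynomial.eval ![z.1, z.2] q

/-- the Lagrange interpolation nodes of degree `m - 1` on the triangle with vertices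
`T 0, T 1, T 2`: the points whose barycentric coordinates lie in {0, 1/(m−1), …, 1} -/
def interpNodes (m : ℕ) (T : Fin 3 → ℝ × ℝ) : Set (ℝ × ℝ) :=
  { z | ∃ k : Fin 3 → ℕ, (∑ i, k i) = m - 1 ∧
      z = ∑ i, ((k i : ℝ) / ((m : ℝ) - 1)) • T i }

/-- `p` is the degree `m - 1` Lagrange interpolant of `v` on the triangle `T` -/
def IsInterpolant (m : ℕ) (T : Fin 3 → ℝ × ℝ) (v p : ℝ × ℝ → ℝ) : Prop :=
  IsPolyDeg (m - 1) p ∧ ∀ z ∈ interpNodes m T, p z = v z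

/-- the Lagrange interpolation operator `I_{m,T}` of degree `m - 1` on the triangle `T` -/
def interp (m : ℕ) (T : Fin 3 → ℝ × ℝ) (v : ℝ × ℝ → ℝ) : ℝ × ℝ → ℝ := by
  classical exact if h : ∃ p, IsInterpolant m T v p then h.choose else 0

/-- the (closed) triangle with vertices `T 0, T 1, T 2` -/
def triangleSet (T : Fin 3 → ℝ × ℝ) : Set (ℝ × ℝ) := convexHull ℝ (Set.range T)

/-- the area of the triangle with vertices `T 0, T 1, T 2` -/
def triArea (T : Fin 3 → ℝ × ℝ) : ℝ :=
  |((T 1).1 - (T 0).1) * ((T 2).2 - (T 0).2) -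
    ((T 2).1 - (T 0).1) * ((T 1).2 - (T 0).2)| / 2

/-- the interpolation error `‖v − I_{m,T} v‖_{L^p(T)}` -/
def lpErr (m : ℕ) (p : ℝ) (T : Fin 3 → ℝ × ℝ) (v : ℝ × ℝ → ℝ) : ℝ :=
  (∫ z in triangleSet T, |v z - interp m T v z| ^ p) ^ (1 / p)

/-- the interpolation error `‖v − I_{m,T} v‖_{L^∞(T)}` -/
def supErr (m : ℕ) (T : Fin 3 → ℝ × ℝ) (v : ℝ × ℝ → ℝ) : ℝ :=
  sSup ((fun z => |v z - interp m T v z|) '' triangleSet T)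

/-- the shape function `K_{m,p}(π) = inf_{|T|=1} ‖π − I_{m,T} π‖_{L^p(T)}` -/
def Kfun (m : ℕ) (p : ℝ) (π : ℝ × ℝ → ℝ) : ℝ :=
  sInf { e | ∃ T : Fin 3 → ℝ × ℝ, triArea T = 1 ∧ e = lpErr m p T π }


lemma isPolyDeg_one_iff {f : ℝ × ℝ → ℝ} :
    IsPolyDeg 1 f ↔ ∃ a b c : ℝ, ∀ z : ℝ × ℝ, f z = a * z.1 + b * z.2 + c := by
  constructor
  · rintro ⟨q, hdeg, hq⟩
    have hmono : ∀ d ∈ q.support, ∀ x y : ℝ, x ^ d 0 * y ^ d 1 =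
        (d 0 : ℝ) * x + (d 1 : ℝ) * y + (1 - d 0 - d 1) := by
      intro d hd x y
      have h : d 0 + d 1 ≤ 1 := by
        have := (MvPolynomial.le_totalDegree hd).trans hdeg
        rwa [Finsupp.sum_fintype _ _ (fun _ => rfl), Fin.sum_univ_two] at this
      rcases (by omega : d 0 = 0 ∧ d 1 = 0 ∨ d 0 = 1 ∧ d 1 = 0 ∨ d 0 = 0 ∧ d 1 = 1) with
        ⟨h0, h1⟩ | ⟨h0, h1⟩ | ⟨h0, h1⟩ <;> simp [h0, h1]
    refine ⟨∑ d ∈ q.support, q.coeff d * d 0, ∑ d ∈ q.support, q.coeff d * d 1,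
      ∑ d ∈ q.support, q.coeff d * (1 - d 0 - d 1), fun z => ?_⟩
    rw [hq, MvPolynomial.eval_eq', Finset.sum_mul, Finset.sum_mul, ← Finset.sum_add_distrib,
      ← Finset.sum_add_distrib]
    refine Finset.sum_congr rfl fun d hd => ?_
    rw [Fin.prod_univ_two, Matrix.cons_val_zero, Matrix.cons_val_one, Matrix.cons_val_fin_one,
      hmono d hd]
    ring
  · rintro ⟨a, b, c, hf⟩
    refine ⟨.C a * .X 0 + .C b * .X 1 + .C c, ?_, fun z => by simp [hf]⟩
    refine (MvPolynomial.totalDegree_add _ _).trans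
      (max_le ((MvPolynomial.totalDegree_add _ _).trans (max_le ?_ ?_)) (by simp))
    all_goals exact (MvPolynomial.totalDegree_mul _ _).trans (by simp)

lemma interpNodes_two (T : Fin 3 → ℝ × ℝ) : interpNodes 2 T = Set.range T := by
  ext z
  constructor
  · rintro ⟨k, hk, rfl⟩
    have hk' : k 0 + k 1 + k 2 = 1 := by simpa [Fin.sum_univ_three] using hk
    rcases (by omega : k 0 = 1 ∧ k 1 = 0 ∧ k 2 = 0 ∨ k 0 = 0 ∧ k 1 = 1 ∧ k 2 = 0 ∨
        k 0 = 0 ∧ k 1 = 0 ∧ k 2 = 1) with ⟨h0, h1, h2⟩ | ⟨h0, h1, h2⟩ | ⟨h0, h1, h2⟩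
    · exact ⟨0, by norm_num [Fin.sum_univ_three, h0, h1, h2]⟩
    · exact ⟨1, by norm_num [Fin.sum_univ_three, h0, h1, h2]⟩
    · exact ⟨2, by norm_num [Fin.sum_univ_three, h0, h1, h2]⟩
  · rintro ⟨i, rfl⟩
    refine ⟨Pi.single i 1, by simp, ?_⟩
    norm_num [Pi.single_apply, Nat.cast_ite, ite_smul]

lemma interp_two_congr {T T' : Fin 3 → ℝ × ℝ} (h : Set.range T = Set.range T') :
    interp 2 T = interp 2 T' := by
  have : IsInterpolant 2 T = IsInterpolant 2 T' := by
    funext v q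
    simp only [IsInterpolant, interpNodes_two, h]
  ext v
  unfold interp
  rw [this]

def triDet (T : Fin 3 → ℝ × ℝ) : ℝ :=
  ((T 1).1 - (T 0).1) * ((T 2).2 - (T 0).2) - ((T 2).1 - (T 0).1) * ((T 1).2 - (T 0).2)

lemma triArea_eq (T : Fin 3 → ℝ × ℝ) : triArea T = |triDet T| / 2 := rfl

lemma exists_affine_interpolant {T : Fin 3 → ℝ × ℝ} (hT : triDet T ≠ 0) (v : ℝ × ℝ → ℝ) :
    ∃ a b c : ℝ, ∀ i, a * (T i).1 + b * (T i).2 + c = v (T i) := by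
  generalize hD : triDet T = D at hT
  set a := ((v (T 1) - v (T 0)) * ((T 2).2 - (T 0).2) -
    (v (T 2) - v (T 0)) * ((T 1).2 - (T 0).2)) / D
  set b := (((T 1).1 - (T 0).1) * (v (T 2) - v (T 0)) -
    ((T 2).1 - (T 0).1) * (v (T 1) - v (T 0))) / D
  refine ⟨a, b, v (T 0) - a * (T 0).1 - b * (T 0).2, fun i => ?_⟩
  fin_cases i <;> simp only [Fin.zero_eta, Fin.mk_one, Fin.reduceFinMk, Fin.isValue]
  · ring
  all_goals simp only [a, b]; field_simp; rw [← hD, triDet]; ring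

lemma isInterpolant_interp_two {T : Fin 3 → ℝ × ℝ} (hT : triDet T ≠ 0) (v : ℝ × ℝ → ℝ) :
    IsInterpolant 2 T v (interp 2 T v) := by
  have h : ∃ q, IsInterpolant 2 T v q := by
    obtain ⟨a, b, c, habc⟩ := exists_affine_interpolant hT v
    refine ⟨fun z => a * z.1 + b * z.2 + c, isPolyDeg_one_iff.2 ⟨a, b, c, fun _ => rfl⟩, ?_⟩
    rintro _ hz
    rw [interpNodes_two] at hz
    obtain ⟨i, rfl⟩ := hz
    exact habc i
  rw [interp, dif_pos h]
  exact h.choose_spec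

lemma interp_two_eq_affine {T : Fin 3 → ℝ × ℝ} (hT : triDet T ≠ 0) (v : ℝ × ℝ → ℝ) :
    ∃ a b c : ℝ, (∀ z, interp 2 T v z = a * z.1 + b * z.2 + c) ∧
      ∀ i, interp 2 T v (T i) = v (T i) := by
  obtain ⟨hdeg, hnodes⟩ := isInterpolant_interp_two hT v
  obtain ⟨a, b, c, habc⟩ := isPolyDeg_one_iff.1 hdeg
  exact ⟨a, b, c, habc, fun i => hnodes _ (by rw [interpNodes_two]; exact ⟨i, rfl⟩)⟩

def triParam (T : Fin 3 → ℝ × ℝ) (st : ℝ × ℝ) : ℝ × ℝ :=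
  T 0 + st.1 • (T 1 - T 0) + st.2 • (T 2 - T 0)

def stdTriangle : Set (ℝ × ℝ) := {st | 0 ≤ st.1 ∧ 0 ≤ st.2 ∧ st.1 + st.2 ≤ 1}

lemma continuous_triParam (T : Fin 3 → ℝ × ℝ) : Continuous (triParam T) := by
  unfold triParam
  fun_prop

lemma triParam_eq_sum (T : Fin 3 → ℝ × ℝ) (st : ℝ × ℝ) :
    triParam T st = (1 - st.1 - st.2) • T 0 + st.1 • T 1 + st.2 • T 2 := by
  unfold triParam
  module

lemma triangleSet_eq_image (T : Fin 3 → ℝ × ℝ) : triangleSet T = triParam T '' stdTriangle := by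
  apply Set.Subset.antisymm
  · apply convexHull_min
    · rintro _ ⟨i, rfl⟩
      fin_cases i
      · exact ⟨(0, 0), by norm_num [stdTriangle], by simp [triParam]⟩
      · exact ⟨(1, 0), by norm_num [stdTriangle], by simp [triParam]⟩
      · exact ⟨(0, 1), by norm_num [stdTriangle], by simp [triParam]⟩
    · rintro _ ⟨u, ⟨hu1, hu2, hu3⟩, rfl⟩ _ ⟨w, ⟨hw1, hw2, hw3⟩, rfl⟩ a b ha hb hab
      refine ⟨a • u + b • w, ⟨?_, ?_, ?_⟩, ?_⟩
      · simp only [Prod.fst_add, Prod.smul_fst, smul_eq_mul]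
        positivity
      · simp only [Prod.snd_add, Prod.smul_snd, smul_eq_mul]
        positivity
      · simp only [Prod.fst_add, Prod.snd_add, Prod.smul_fst, Prod.smul_snd, smul_eq_mul]
        nlinarith
      · obtain rfl : b = 1 - a := by linarith
        simp only [triParam, Prod.fst_add, Prod.snd_add, Prod.smul_fst, Prod.smul_snd, smul_eq_mul]
        module
  · rintro _ ⟨st, ⟨hs, ht, hst⟩, rfl⟩
    rw [triParam_eq_sum]
    have hmem : ∀ i, T i ∈ triangleSet T := fun i => subset_convexHull ℝ _ ⟨i, rfl⟩
    have hconv : Convex ℝ (triangleSet T) := convex_convexHull ℝ _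
    simpa [Fin.sum_univ_three] using hconv.sum_mem (t := Finset.univ)
      (w := ![1 - st.1 - st.2, st.1, st.2]) (z := T)
      (fun i _ => by fin_cases i <;> simp <;> linarith)
      (by simp [Fin.sum_univ_three]; ring) (fun i _ => hmem i)

lemma isCompact_triangleSet (T : Fin 3 → ℝ × ℝ) : IsCompact (triangleSet T) :=
  (Set.finite_range T).isCompact_convexHull ℝ

lemma triangleSet_comp_perm (T : Fin 3 → ℝ × ℝ) (σ : Equiv.Perm (Fin 3)) :
    triangleSet (T ∘ σ) = triangleSet T := by
  rw [triangleSet, σ.surjective.range_comp, triangleSet]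

lemma volume_triParam_image (T : Fin 3 → ℝ × ℝ) (s : Set (ℝ × ℝ)) :
    volume (triParam T '' s) = ENNReal.ofReal |triDet T| * volume s := by
  set L := Matrix.toLin (Module.Basis.finTwoProd ℝ) (Module.Basis.finTwoProd ℝ)
    !![(T 1).1 - (T 0).1, (T 2).1 - (T 0).1; (T 1).2 - (T 0).2, (T 2).2 - (T 0).2]
  have himg : triParam T '' s = (T 0 + ·) '' (L '' s) := by
    rw [← Set.image_comp]
    refine Set.image_congr fun st _ => ?_
    simp only [Function.comp_apply, L, Matrix.toLin_finTwoProd_apply]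
    ext <;> simp only [triParam, Prod.fst_add, Prod.snd_add, Prod.smul_fst, Prod.smul_snd,
      Prod.fst_sub, Prod.snd_sub, smul_eq_mul] <;> ring
  rw [himg, Set.image_add_left, measure_preimage_add, Measure.addHaar_image_linearMap,
    LinearMap.det_toLin, Matrix.det_fin_two_of]
  rfl

lemma volume_real_triangleSet (T : Fin 3 → ℝ × ℝ) :
    volume.real (triangleSet T) = |triDet T| * volume.real stdTriangle := by
  rw [measureReal_def, triangleSet_eq_image, volume_triParam_image, ENNReal.toReal_mul,
    ENNReal.toReal_ofReal (abs_nonneg _), measureReal_def]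

lemma comp_finRotate_three (T : Fin 3 → ℝ × ℝ) : T ∘ finRotate 3 = ![T 1, T 2, T 0] := by
  ext i : 1
  fin_cases i <;> rfl

lemma comp_finRotate_three_symm (T : Fin 3 → ℝ × ℝ) :
    T ∘ (finRotate 3).symm = ![T 2, T 0, T 1] := by
  ext i : 1
  fin_cases i <;> rfl

lemma lpErr_nonneg (m : ℕ) (p : ℝ) (T : Fin 3 → ℝ × ℝ) (v : ℝ × ℝ → ℝ) : 0 ≤ lpErr m p T v :=
  Real.rpow_nonneg (integral_nonneg fun _ => Real.rpow_nonneg (abs_nonneg _) p) _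

lemma lpErr_two_comp_perm (p : ℝ) (T : Fin 3 → ℝ × ℝ) (σ : Equiv.Perm (Fin 3))
    (v : ℝ × ℝ → ℝ) : lpErr 2 p (T ∘ σ) v = lpErr 2 p T v := by
  rw [lpErr, lpErr, triangleSet_comp_perm, interp_two_congr (σ.surjective.range_comp T)]

lemma lpErr_le_of_forall_abs_le (m : ℕ) {p : ℝ} (hp : 0 < p) {T : Fin 3 → ℝ × ℝ}
    {v : ℝ × ℝ → ℝ} {M : ℝ} (hM : 0 ≤ M)
    (h : ∀ z ∈ triangleSet T, |v z - interp m T v z| ≤ M) :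
    lpErr m p T v ≤ M * volume.real (triangleSet T) ^ (1 / p) := by
  have hint : ∫ z in triangleSet T, |v z - interp m T v z| ^ p ≤
      M ^ p * volume.real (triangleSet T) := by
    refine (Real.le_norm_self _).trans <| norm_setIntegral_le_of_norm_le_const
      (f := fun z => |v z - interp m T v z| ^ p) (isCompact_triangleSet T).measure_lt_top
      fun z hz => ?_
    rw [Real.norm_eq_abs, abs_of_nonneg (Real.rpow_nonneg (abs_nonneg _) p)]
    exact Real.rpow_le_rpow (abs_nonneg _) (h z hz) hp.le
  calc lpErr m p T v ≤ (M ^ p * volume.real (triangleSet T)) ^ (1 / p) :=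
        Real.rpow_le_rpow (integral_nonneg fun _ => Real.rpow_nonneg (abs_nonneg _) p) hint
          (by positivity)
    _ = M * volume.real (triangleSet T) ^ (1 / p) := by
        rw [Real.mul_rpow (Real.rpow_nonneg hM p) measureReal_nonneg, ← Real.rpow_mul hM,
          mul_one_div_cancel hp.ne', Real.rpow_one]

lemma Kfun_le_lpErr {m : ℕ} {p : ℝ} {π : ℝ × ℝ → ℝ} {T : Fin 3 → ℝ × ℝ} (hT : triArea T = 1) :
    Kfun m p π ≤ lpErr m p T π :=
  csInf_le ⟨0, by rintro _ ⟨T, -, rfl⟩; exact lpErr_nonneg m p T π⟩ ⟨T, hT, rfl⟩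

lemma le_Kfun {m : ℕ} {p c : ℝ} {π : ℝ × ℝ → ℝ}
    (h : ∀ T : Fin 3 → ℝ × ℝ, triArea T = 1 → c ≤ lpErr m p T π) : c ≤ Kfun m p π :=
  le_csInf ⟨_, ![(0, 0), (2, 0), (0, 1)], by simp only [triArea, Matrix.cons_val]; norm_num, rfl⟩
    (by rintro _ ⟨T, hT, rfl⟩; exact h T hT)

lemma abs_barycentric_le {a b c M s t : ℝ} (ha : |a| ≤ M) (hb : |b| ≤ M) (hc : |c| ≤ M)
    (hst : (s, t) ∈ stdTriangle) :
    |(1 - s - t) * s * a + (1 - s - t) * t * b + s * t * c| ≤ M := by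
  obtain ⟨hs, ht, hst⟩ : 0 ≤ s ∧ 0 ≤ t ∧ s + t ≤ 1 := hst
  have h0 : 0 ≤ 1 - s - t := by linarith
  calc |(1 - s - t) * s * a + (1 - s - t) * t * b + s * t * c|
      ≤ (1 - s - t) * s * |a| + (1 - s - t) * t * |b| + s * t * |c| := by
        refine (abs_add_le _ _).trans (add_le_add ((abs_add_le _ _).trans (add_le_add ?_ ?_)) ?_)
        all_goals rw [abs_mul, abs_of_nonneg (by positivity)]
    _ ≤ ((1 - s - t) * s + (1 - s - t) * t + s * t) * M := by
        rw [add_mul, add_mul]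
        gcongr
    _ ≤ M := by
        refine mul_le_of_le_one_left ((abs_nonneg a).trans ha) ?_
        nlinarith [mul_nonneg hs ht, mul_nonneg h0 hs, mul_nonneg h0 ht]

/-- Near the midpoint of the edge where `|a|` is largest the barycentric sum stays away from `0`. -/
lemma le_abs_barycentric {a b c s t : ℝ} (hb : |b| ≤ |a|) (hc : |c| ≤ |a|)
    (hs : s ∈ Set.Icc (1 / 4) (1 / 2)) (ht : t ∈ Set.Icc 0 (1 / 16)) :
    |a| / 16 ≤ |(1 - s - t) * s * a + (1 - s - t) * t * b + s * t * c| := by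
  obtain ⟨hs1, hs2⟩ := hs
  obtain ⟨ht1, ht2⟩ := ht
  have h0 : 0 ≤ 1 - s - t := by linarith
  have hrest : |(1 - s - t) * t * b + s * t * c| ≤ t * (1 - t) * |a| := by
    calc |(1 - s - t) * t * b + s * t * c| ≤ (1 - s - t) * t * |b| + s * t * |c| := by
          refine (abs_add_le _ _).trans (add_le_add ?_ ?_)
          all_goals rw [abs_mul, abs_of_nonneg (by positivity)]
      _ ≤ (1 - s - t) * t * |a| + s * t * |a| := by gcongr
      _ = t * (1 - t) * |a| := by ring
  have hcoef : 1 / 16 ≤ (1 - s - t) * s - t * (1 - t) := by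
    nlinarith [mul_nonneg (sub_nonneg.2 hs1) (sub_nonneg.2 hs2), mul_nonneg ht1 (sub_nonneg.2 hs2)]
  calc |a| / 16 ≤ ((1 - s - t) * s - t * (1 - t)) * |a| := by
        nlinarith [abs_nonneg a]
    _ ≤ |(1 - s - t) * s * a| - |(1 - s - t) * t * b + s * t * c| := by
        rw [abs_mul, abs_of_nonneg (mul_nonneg h0 (by linarith : (0 : ℝ) ≤ s))]
        linarith
    _ ≤ |(1 - s - t) * s * a + (1 - s - t) * t * b + s * t * c| := by
        rw [add_assoc]
        exact abs_sub_abs_le_abs_add _ _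

lemma abs_edge_values_identity_le {a b c : ℝ} (hb : |b| ≤ |a|) (hc : |c| ≤ |a|) :
    |2 * (a * b + b * c + c * a) - a ^ 2 - b ^ 2 - c ^ 2| ≤ 9 * a ^ 2 := by
  have hab : |a * b| ≤ a ^ 2 := by rw [abs_mul, ← sq_abs a, sq]; gcongr
  have hbc : |b * c| ≤ a ^ 2 := by rw [abs_mul, ← sq_abs a, sq]; gcongr
  have hca : |c * a| ≤ a ^ 2 := by rw [abs_mul, ← sq_abs a, sq]; gcongr
  have hb2 : b ^ 2 ≤ a ^ 2 := sq_le_sq.2 hb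
  have hc2 : c ^ 2 ≤ a ^ 2 := sq_le_sq.2 hc
  rw [abs_le]
  constructor <;> nlinarith [abs_le.1 hab, abs_le.1 hbc, abs_le.1 hca, sq_nonneg b, sq_nonneg c]

section QuadraticForm

variable {π : ℝ × ℝ → ℝ} {A B C : ℝ}

lemma continuous_of_eq_quadratic (hπ : ∀ z, π z = A * z.1 ^ 2 + B * z.1 * z.2 + C * z.2 ^ 2) :
    Continuous π := by
  rw [funext hπ]
  fun_prop

lemma sub_interp_triParam (hπ : ∀ z, π z = A * z.1 ^ 2 + B * z.1 * z.2 + C * z.2 ^ 2)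
    {T : Fin 3 → ℝ × ℝ} (hT : triDet T ≠ 0) (st : ℝ × ℝ) :
    π (triParam T st) - interp 2 T π (triParam T st) =
      -((1 - st.1 - st.2) * st.1 * π (T 1 - T 0) + (1 - st.1 - st.2) * st.2 * π (T 2 - T 0) +
        st.1 * st.2 * π (T 2 - T 1)) := by
  obtain ⟨a, b, c, haff, hnode⟩ := interp_two_eq_affine hT π
  have h : ∀ i, a * (T i).1 + b * (T i).2 + c =
      A * (T i).1 ^ 2 + B * (T i).1 * (T i).2 + C * (T i).2 ^ 2 := fun i => by
    rw [← haff, hnode, hπ]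
  simp only [haff, hπ, triParam, Prod.fst_add, Prod.snd_add, Prod.smul_fst, Prod.smul_snd,
    Prod.fst_sub, Prod.snd_sub, smul_eq_mul]
  linear_combination -(1 - st.1 - st.2) * h 0 - st.1 * h 1 - st.2 * h 2

/-- Heron's formula, with `π` in the role of the squared length. -/
lemma edge_values_identity (hπ : ∀ z, π z = A * z.1 ^ 2 + B * z.1 * z.2 + C * z.2 ^ 2)
    (T : Fin 3 → ℝ × ℝ) :
    2 * (π (T 1 - T 0) * π (T 2 - T 0) + π (T 2 - T 0) * π (T 2 - T 1) +
        π (T 2 - T 1) * π (T 1 - T 0)) - π (T 1 - T 0) ^ 2 - π (T 2 - T 0) ^ 2 -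
        π (T 2 - T 1) ^ 2 = -discrim A B C * triDet T ^ 2 := by
  simp only [hπ, discrim, triDet, Prod.fst_sub, Prod.snd_sub]
  ring

lemma continuous_sub_interp (hπ : ∀ z, π z = A * z.1 ^ 2 + B * z.1 * z.2 + C * z.2 ^ 2)
    {T : Fin 3 → ℝ × ℝ} (hT : triDet T ≠ 0) : Continuous fun z => π z - interp 2 T π z := by
  obtain ⟨a, b, c, haff, -⟩ := interp_two_eq_affine hT π
  rw [funext haff]
  exact (continuous_of_eq_quadratic hπ).sub (by fun_prop)

lemma integral_sub_interp_ge {p : ℝ} (hp : 0 < p)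
    (hπ : ∀ z, π z = A * z.1 ^ 2 + B * z.1 * z.2 + C * z.2 ^ 2) {T : Fin 3 → ℝ × ℝ}
    (hT : triDet T ≠ 0) (hb : |π (T 2 - T 0)| ≤ |π (T 1 - T 0)|)
    (hc : |π (T 2 - T 1)| ≤ |π (T 1 - T 0)|) :
    (|π (T 1 - T 0)| / 16) ^ p * (|triDet T| / 64) ≤
      ∫ z in triangleSet T, |π z - interp 2 T π z| ^ p := by
  set R : Set (ℝ × ℝ) := Set.Icc (1 / 4) (1 / 2) ×ˢ Set.Icc 0 (1 / 16)
  have hRcompact : IsCompact (triParam T '' R) :=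
    (isCompact_Icc.prod isCompact_Icc).image (continuous_triParam T)
  have hRsub : triParam T '' R ⊆ triangleSet T := by
    rw [triangleSet_eq_image]
    refine Set.image_mono fun st ⟨⟨hs1, hs2⟩, ht1, ht2⟩ => ⟨?_, ht1, ?_⟩ <;> linarith
  have hvol : volume.real (triParam T '' R) = |triDet T| / 64 := by
    rw [measureReal_def, volume_triParam_image, Measure.volume_eq_prod, Measure.prod_prod,
      Real.volume_Icc, Real.volume_Icc, ENNReal.toReal_mul, ENNReal.toReal_mul]
    norm_num
    ring
  have hint : IntegrableOn (fun z => |π z - interp 2 T π z| ^ p) (triangleSet T) :=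
    ((continuous_sub_interp hπ hT).abs.rpow_const fun _ => Or.inr hp.le).continuousOn
      |>.integrableOn_compact (isCompact_triangleSet T)
  calc (|π (T 1 - T 0)| / 16) ^ p * (|triDet T| / 64)
      = (|π (T 1 - T 0)| / 16) ^ p * volume.real (triParam T '' R) := by rw [hvol]
    _ ≤ ∫ z in triParam T '' R, |π z - interp 2 T π z| ^ p := by
        refine setIntegral_ge_of_const_le_real hRcompact.measurableSet
          hRcompact.measure_lt_top.ne ?_ (hint.mono_set hRsub)
        rintro _ ⟨st, ⟨hs, ht⟩, rfl⟩
        refine Real.rpow_le_rpow (by positivity) ?_ hp.le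
        rw [sub_interp_triParam hπ hT, abs_neg]
        exact le_abs_barycentric hb hc hs ht
    _ ≤ ∫ z in triangleSet T, |π z - interp 2 T π z| ^ p :=
        setIntegral_mono_set hint (Filter.Eventually.of_forall fun _ =>
          Real.rpow_nonneg (abs_nonneg _) p) hRsub.eventuallyLE

lemma exists_perm_abs_edge_le (hπ : ∀ z, π z = A * z.1 ^ 2 + B * z.1 * z.2 + C * z.2 ^ 2)
    (T : Fin 3 → ℝ × ℝ) :
    ∃ σ : Equiv.Perm (Fin 3), triDet (T ∘ σ) = triDet T ∧
      |π ((T ∘ σ) 2 - (T ∘ σ) 0)| ≤ |π ((T ∘ σ) 1 - (T ∘ σ) 0)| ∧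
      |π ((T ∘ σ) 2 - (T ∘ σ) 1)| ≤ |π ((T ∘ σ) 1 - (T ∘ σ) 0)| := by
  have hswap : ∀ x y, π (x - y) = π (y - x) := fun x y => by
    simp only [hπ, Prod.fst_sub, Prod.snd_sub]
    ring
  obtain h | h | h : (|π (T 2 - T 0)| ≤ |π (T 1 - T 0)| ∧ |π (T 2 - T 1)| ≤ |π (T 1 - T 0)|) ∨
      (|π (T 1 - T 0)| ≤ |π (T 2 - T 1)| ∧ |π (T 2 - T 0)| ≤ |π (T 2 - T 1)|) ∨
      (|π (T 1 - T 0)| ≤ |π (T 2 - T 0)| ∧ |π (T 2 - T 1)| ≤ |π (T 2 - T 0)|) := by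
    rcases le_total |π (T 2 - T 0)| |π (T 1 - T 0)| with h1 | h1 <;>
      rcases le_total |π (T 2 - T 1)| |π (T 1 - T 0)| with h2 | h2 <;>
      rcases le_total |π (T 2 - T 1)| |π (T 2 - T 0)| with h3 | h3
    all_goals first
      | exact Or.inl ⟨by linarith, by linarith⟩
      | exact Or.inr (Or.inl ⟨by linarith, by linarith⟩)
      | exact Or.inr (Or.inr ⟨by linarith, by linarith⟩)
  · exact ⟨1, rfl, h⟩
  · refine ⟨finRotate 3, ?_, ?_⟩
    · rw [comp_finRotate_three]
      simp only [triDet, Matrix.cons_val]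
      ring
    · simp only [comp_finRotate_three, Matrix.cons_val]
      rwa [hswap (T 0) (T 1), hswap (T 0) (T 2)]
  · refine ⟨(finRotate 3).symm, ?_, ?_⟩
    · rw [comp_finRotate_three_symm]
      simp only [triDet, Matrix.cons_val]
      ring
    · simp only [comp_finRotate_three_symm, Matrix.cons_val]
      rw [hswap (T 1) (T 2), hswap (T 0) (T 2)]
      exact h.symm

lemma lpErr_two_ge {p : ℝ} (hp : 0 < p)
    (hπ : ∀ z, π z = A * z.1 ^ 2 + B * z.1 * z.2 + C * z.2 ^ 2) {T : Fin 3 → ℝ × ℝ}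
    (hT : triArea T = 1) :
    ((Real.sqrt (4 * |discrim A B C| / 9) / 16) ^ p / 32) ^ (1 / p) ≤ lpErr 2 p T π := by
  obtain ⟨σ, hσ, hb, hc⟩ := exists_perm_abs_edge_le hπ T
  set T' := T ∘ σ
  have hdet : |triDet T'| = 2 := by rw [hσ]; rw [triArea_eq] at hT; linarith
  have hedge : Real.sqrt (4 * |discrim A B C| / 9) ≤ |π (T' 1 - T' 0)| := by
    have h := abs_edge_values_identity_le hb hc
    rw [edge_values_identity hπ, abs_mul, abs_neg, abs_pow, hdet] at h
    rw [Real.sqrt_le_left (abs_nonneg _), sq_abs]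
    linarith
  rw [← lpErr_two_comp_perm p T σ, lpErr]
  refine Real.rpow_le_rpow (by positivity) ?_ (by positivity)
  calc (Real.sqrt (4 * |discrim A B C| / 9) / 16) ^ p / 32
      ≤ (|π (T' 1 - T' 0)| / 16) ^ p * (|triDet T'| / 64) := by
        rw [hdet]
        have := Real.rpow_le_rpow (by positivity) (div_le_div_of_nonneg_right hedge
          (by norm_num : (0 : ℝ) ≤ 16)) hp.le
        linarith
    _ ≤ _ := integral_sub_interp_ge hp hπ (by rw [← abs_ne_zero, hdet]; norm_num) hb hc

lemma lpErr_two_le_of_abs_edge_le {p : ℝ} (hp : 0 < p)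
    (hπ : ∀ z, π z = A * z.1 ^ 2 + B * z.1 * z.2 + C * z.2 ^ 2) {T : Fin 3 → ℝ × ℝ}
    (hT : triDet T ≠ 0) {M : ℝ} (h1 : |π (T 1 - T 0)| ≤ M) (h2 : |π (T 2 - T 0)| ≤ M)
    (h3 : |π (T 2 - T 1)| ≤ M) :
    lpErr 2 p T π ≤ M * (|triDet T| * volume.real stdTriangle) ^ (1 / p) := by
  rw [← volume_real_triangleSet]
  refine lpErr_le_of_forall_abs_le 2 hp ((abs_nonneg _).trans h1) ?_
  rw [triangleSet_eq_image]
  rintro _ ⟨st, hst, rfl⟩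
  rw [sub_interp_triParam hπ hT, abs_neg]
  exact abs_barycentric_le h1 h2 h3 hst

lemma Kfun_two_pos {p : ℝ} (hp : 0 < p)
    (hπ : ∀ z, π z = A * z.1 ^ 2 + B * z.1 * z.2 + C * z.2 ^ 2) (hd : discrim A B C ≠ 0) :
    0 < Kfun 2 p π := by
  refine lt_of_lt_of_le ?_ (le_Kfun fun T hT => lpErr_two_ge hp hπ hT)
  have : 0 < Real.sqrt (4 * |discrim A B C| / 9) := Real.sqrt_pos.2 (by positivity)
  positivity

/-- Flat triangles along the isotropic direction `(β, -α)` of `l (α x + β y)²`: the values of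
the form on the edges are `0, l r², l r²`. -/
lemma Kfun_two_le_of_eq_mul_sq {p : ℝ} (hp : 0 < p) {l α β : ℝ}
    (hπ : ∀ z : ℝ × ℝ, π z = l * (α * z.1 + β * z.2) ^ 2) (hαβ : α ^ 2 + β ^ 2 ≠ 0)
    {r : ℝ} (hr : 0 < r) :
    Kfun 2 p π ≤ |l| * r ^ 2 * (2 * volume.real stdTriangle) ^ (1 / p) := by
  set S := α ^ 2 + β ^ 2
  set T : Fin 3 → ℝ × ℝ := ![(0, 0), (2 * β / r, -(2 * α / r)), (r * α / S, r * β / S)]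
  have hπ' : ∀ z : ℝ × ℝ, π z = l * α ^ 2 * z.1 ^ 2 + 2 * l * α * β * z.1 * z.2 +
      l * β ^ 2 * z.2 ^ 2 := fun z => by rw [hπ]; ring
  have hdet : triDet T = 2 := by
    simp only [triDet, T, Matrix.cons_val]
    field_simp
    ring
  have h1 : π (T 1 - T 0) = 0 := by
    simp only [hπ, T, Matrix.cons_val, Prod.fst_sub, Prod.snd_sub]
    ring
  have h2 : π (T 2 - T 0) = l * r ^ 2 := by
    simp only [hπ, T, Matrix.cons_val, Prod.fst_sub, Prod.snd_sub]
    field_simp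
    ring
  have h3 : π (T 2 - T 1) = l * r ^ 2 := by
    simp only [hπ, T, Matrix.cons_val, Prod.fst_sub, Prod.snd_sub]
    field_simp
    ring
  have hM : |l * r ^ 2| = |l| * r ^ 2 := by rw [abs_mul, abs_sq]
  calc Kfun 2 p π ≤ lpErr 2 p T π := Kfun_le_lpErr (by rw [triArea_eq, hdet]; norm_num)
    _ ≤ |l| * r ^ 2 * (|triDet T| * volume.real stdTriangle) ^ (1 / p) :=
        lpErr_two_le_of_abs_edge_le hp hπ' (by rw [hdet]; norm_num)
          (by rw [h1, abs_zero]; positivity) (by rw [h2, hM]) (by rw [h3, hM])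
    _ = |l| * r ^ 2 * (2 * volume.real stdTriangle) ^ (1 / p) := by rw [hdet, abs_two]

lemma Kfun_two_eq_zero_of_eq_mul_sq {p : ℝ} (hp : 0 < p) {l α β : ℝ}
    (hπ : ∀ z : ℝ × ℝ, π z = l * (α * z.1 + β * z.2) ^ 2) : Kfun 2 p π = 0 := by
  obtain ⟨l, α, β, hπ, hαβ⟩ : ∃ l α β : ℝ,
      (∀ z : ℝ × ℝ, π z = l * (α * z.1 + β * z.2) ^ 2) ∧ α ^ 2 + β ^ 2 ≠ 0 := by
    by_cases h : α ^ 2 + β ^ 2 = 0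
    · have hα : α = 0 := by nlinarith [sq_nonneg α, sq_nonneg β]
      have hβ : β = 0 := by nlinarith [sq_nonneg α, sq_nonneg β]
      exact ⟨0, 1, 0, fun z => by simp [hπ, hα, hβ], by norm_num⟩
    · exact ⟨l, α, β, hπ, h⟩
  set c := |l| * (2 * volume.real stdTriangle) ^ (1 / p)
  have hlim : Filter.Tendsto (fun r : ℝ => c * r ^ 2) (nhdsWithin 0 (Set.Ioi 0)) (nhds 0) := by
    have : Continuous fun r : ℝ => c * r ^ 2 := by fun_prop
    simpa using this.tendsto 0 |>.mono_left nhdsWithin_le_nhds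
  refine le_antisymm (ge_of_tendsto hlim ?_) (le_Kfun fun T _ => lpErr_nonneg 2 p T π)
  filter_upwards [self_mem_nhdsWithin] with r hr
  calc Kfun 2 p π ≤ |l| * r ^ 2 * (2 * volume.real stdTriangle) ^ (1 / p) :=
        Kfun_two_le_of_eq_mul_sq hp hπ hαβ hr
    _ = c * r ^ 2 := by ring

end QuadraticForm

lemma exists_eq_mul_sq_of_discrim_eq_zero {A B C : ℝ} (hd : discrim A B C = 0) :
    ∃ l α β : ℝ, ∀ z : ℝ × ℝ,
      A * z.1 ^ 2 + B * z.1 * z.2 + C * z.2 ^ 2 = l * (α * z.1 + β * z.2) ^ 2 := by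
  rw [discrim] at hd
  by_cases hA : A = 0
  · have hB : B = 0 := by simpa [hA] using hd
    exact ⟨C, 0, 1, fun z => by simp [hA, hB]⟩
  · refine ⟨1 / A, A, B / 2, fun z => ?_⟩
    field_simp
    linear_combination (-z.2 ^ 2) * hd

lemma formEval_two (a : Fin 3 → ℝ) (z : ℝ × ℝ) :
    formEval 2 a z = a 2 * z.1 ^ 2 + a 1 * z.1 * z.2 + a 0 * z.2 ^ 2 := by
  simp only [formEval, Nat.reduceAdd, Fin.sum_univ_three, Fin.isValue, Fin.coe_ofNat_eq_mod,
    Nat.zero_mod, pow_zero, mul_one, tsub_zero, Nat.one_mod, pow_one, Nat.add_one_sub_one,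
    Nat.mod_succ, tsub_self]
  ring

/-- K_{2,p} vanishes exactly on degenerate quadratic forms:
K_{2,p}(π) = 0 iff π(x,y) = λ(αx + βy)². -/
theorem stmt14 (p : ℝ) (hp : 1 ≤ p) (π : ℝ × ℝ → ℝ) (hπ : IsForm 2 π) :
    Kfun 2 p π = 0 ↔
      ∃ l α β : ℝ, ∀ z : ℝ × ℝ, π z = l * (α * z.1 + β * z.2) ^ 2 := by
  have hp0 : 0 < p := by linarith
  obtain ⟨a, ha⟩ := hπ
  have hπ : ∀ z, π z = a 2 * z.1 ^ 2 + a 1 * z.1 * z.2 + a 0 * z.2 ^ 2 := fun z => by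
    rw [ha, formEval_two]
  constructor
  · intro hK
    have hd : discrim (a 2) (a 1) (a 0) = 0 := by
      by_contra hd
      exact (Kfun_two_pos hp0 hπ hd).ne' hK
    obtain ⟨l, α, β, h⟩ := exists_eq_mul_sq_of_discrim_eq_zero hd
    exact ⟨l, α, β, fun z => (hπ z).trans (h z)⟩
  · rintro ⟨l, α, β, h⟩
    exact Kfun_two_eq_zero_of_eq_mul_sq hp0 h

end
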